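/- arXiv:0706.2718 — 3 statements merged into one kernel-verified Lean document; each statement's English description precedes it below -/
import Mathlib

section
/- In the ℤ₂-graded associative conformal algebra W = k[D] ⊗ Aₙ[v], the elements V := v, Xᵢ := vξᵢ, Pᵢ := ∂ᵢ (i = 1,…,n), with V even and Xᵢ, Pᵢ odd, satisfy the W-relations. (Equivalently, the map φ₂ : v ↦ v, ξᵢ ↦ vξᵢ, ∂ᵢ ↦ ∂ᵢ defines a homomorphism of Lie conformal superalgebras from Wₙ into W^{(−)}.) -/
/-! ### Conformal algebras: basic definitions -/

/-- A conformal algebra over a field `k`: a `k`-vector space with a linear map `D`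
and a family of bilinear `n`-th products satisfying (C1) locality, (C2) and (C3). -/
structure ConfAlg (k : Type) [Field k] (C : Type) [AddCommGroup C] [Module k C] where
  Dmap : C →ₗ[k] C
  prod : ℕ → C →ₗ[k] C →ₗ[k] C
  locality : ∀ a b : C, ∃ N : ℕ, ∀ m, N ≤ m → prod m a b = 0
  axC2 : ∀ (m : ℕ) (a b : C), prod m (Dmap a) b = -((m : k)) • prod (m - 1) a b
  axC3 : ∀ (m : ℕ) (a b : C),
    prod m a (Dmap b) = Dmap (prod m a b) + (m : k) • prod (m - 1) a b

section BasicDefs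

variable {k : Type} [Field k] {C : Type} [AddCommGroup C] [Module k C]

/-- Left associativity identity for a conformal algebra. -/
def ConfAlg.IsAssoc (A : ConfAlg k C) : Prop :=
  ∀ (nn m : ℕ) (a b c : C),
    A.prod m (A.prod nn a b) c =
      ∑ s ∈ Finset.range (nn + 1),
        ((-1 : k) ^ s * (nn.choose s : k)) • A.prod (nn - s) a (A.prod (m + s) b c)

/-- A ℤ₂-grading of a conformal algebra: `grade false` is the even part,
`grade true` the odd part. -/
structure ConfGrading (A : ConfAlg k C) where
  grade : Bool → Submodule k C
  inf_bot : grade false ⊓ grade true = ⊥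
  sup_top : grade false ⊔ grade true = ⊤
  D_mem : ∀ (i : Bool), ∀ x ∈ grade i, A.Dmap x ∈ grade i
  prod_mem : ∀ (i j : Bool) (m : ℕ) (x y : C), x ∈ grade i → y ∈ grade j →
    A.prod m x y ∈ grade (xor i j)

/-- The "conjugate" product `{b ∘ₘ a} = ∑_{s ≥ 0} ((-1)^{m+s}/s!) • Dˢ (b ∘_{m+s} a)`,
a finite sum by locality, expressed via `finsum`. -/
noncomputable def cbrR (D : C →ₗ[k] C) (P : ℕ → C →ₗ[k] C →ₗ[k] C)
    (m : ℕ) (b a : C) : C :=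
  ∑ᶠ s : ℕ, ((-1 : k) ^ (m + s) * ((Nat.factorial s : k))⁻¹) • (D ^ s) (P (m + s) b a)

/-- The super-commutator `[a ∘ₘ b] = a ∘ₘ b - (-1)^{p(a)p(b)} {b ∘ₘ a}` for homogeneous
`a, b` of parities `pa, pb` (`false` = even, `true` = odd). -/
noncomputable def sbrR (D : C →ₗ[k] C) (P : ℕ → C →ₗ[k] C →ₗ[k] C)
    (pa pb : Bool) (m : ℕ) (a b : C) : C :=
  P m a b - (if pa && pb then (-1 : k) else 1) • cbrR D P m b a

/-- The defining relations of the Lie conformal superalgebra `Wₙ`, for homogeneous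
elements `V` (even), `X i`, `Pd i` (odd) of an associative conformal algebra with
derivation `D` and products `P`. -/
noncomputable def WRelsR (D : C →ₗ[k] C) (P : ℕ → C →ₗ[k] C →ₗ[k] C) {n : ℕ}
    (V : C) (X Pd : Fin n → C) : Prop :=
  (∀ i j, sbrR D P true true 0 (X i) (X j) = - sbrR D P true true 0 (X j) (X i)) ∧
  (∀ (m : ℕ) (i j), sbrR D P true true m (Pd i) (Pd j) = 0) ∧
  (∀ i j, sbrR D P true true 0 (Pd j) (X i) = if i = j then V else 0) ∧
  (∀ i, sbrR D P false true 0 V (X i) = D (X i)) ∧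
  (∀ i, sbrR D P true false 0 (X i) V = D (X i)) ∧
  (∀ i, sbrR D P true false 1 (X i) V = (2 : k) • X i) ∧
  (∀ j, sbrR D P true false 0 (Pd j) V = 0) ∧
  (∀ j, sbrR D P true false 1 (Pd j) V = Pd j) ∧
  (∀ i j, sbrR D P true true 0 (X i) (X j)
      = ((2 : k))⁻¹ • D (sbrR D P true true 1 (X i) (X j))) ∧
  (sbrR D P false false 0 V V = D V) ∧
  (sbrR D P false false 1 V V = (2 : k) • V) ∧
  (∀ m, 2 ≤ m →
    (∀ i j, sbrR D P true true m (X i) (X j) = 0) ∧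
    (∀ j, sbrR D P false true m V (Pd j) = 0) ∧
    (∀ i j, sbrR D P true true m (X i) (Pd j) = 0) ∧
    (∀ i, sbrR D P false true m V (X i) = 0) ∧
    sbrR D P false false m V V = 0)

end BasicDefs
set_option maxSynthPendingDepth 5

/-! ### The algebra `Aₙ` and the conformal algebra `W = k[D] ⊗ Aₙ[v]` -/

/-- Generators of the algebra `Aₙ`: `xi i` stands for `ξᵢ`, `pa i` for `∂ᵢ`. -/
inductive WGen (n : ℕ) : Type
  | xi : Fin n → WGen n
  | pa : Fin n → WGen n

/-- The defining relations of `Aₙ`: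
`ξᵢξⱼ + ξⱼξᵢ = 0`, `∂ᵢ∂ⱼ + ∂ⱼ∂ᵢ = 0`, `∂ᵢξⱼ + ξⱼ∂ᵢ = δᵢⱼ·1`. -/
inductive ARel (k : Type) [Field k] (n : ℕ) :
    FreeAlgebra k (WGen n) → FreeAlgebra k (WGen n) → Prop
  | xixi (i j : Fin n) : ARel k n
      (FreeAlgebra.ι k (WGen.xi i) * FreeAlgebra.ι k (WGen.xi j)
        + FreeAlgebra.ι k (WGen.xi j) * FreeAlgebra.ι k (WGen.xi i)) 0
  | papa (i j : Fin n) : ARel k n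
      (FreeAlgebra.ι k (WGen.pa i) * FreeAlgebra.ι k (WGen.pa j)
        + FreeAlgebra.ι k (WGen.pa j) * FreeAlgebra.ι k (WGen.pa i)) 0
  | paxi (i j : Fin n) : ARel k n
      (FreeAlgebra.ι k (WGen.pa i) * FreeAlgebra.ι k (WGen.xi j)
        + FreeAlgebra.ι k (WGen.xi j) * FreeAlgebra.ι k (WGen.pa i))
      (if i = j then 1 else 0)

/-- The algebra `Aₙ`. -/
abbrev An (k : Type) [Field k] (n : ℕ) := RingQuot (ARel k n)

/-- `Aₙ[v]`: polynomials over `Aₙ` in the variable `v` (= `Polynomial.X`). -/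
abbrev Av (k : Type) [Field k] (n : ℕ) := Polynomial (An k n)

/-- `W = k[D] ⊗ Aₙ[v]`, realized as polynomials in the (outer) variable `D`
with coefficients in `Aₙ[v]`; the element `Dᵗ ⊗ w` is `(monomial t) w`. -/
abbrev Wc (k : Type) [Field k] (n : ℕ) := Polynomial (Av k n)

/-- The generator `ξᵢ ∈ Aₙ`. -/
noncomputable def xg (k : Type) [Field k] (n : ℕ) (i : Fin n) : An k n :=
  RingQuot.mkAlgHom k (ARel k n) (FreeAlgebra.ι k (WGen.xi i))

/-- The generator `∂ᵢ ∈ Aₙ`. -/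
noncomputable def dg (k : Type) [Field k] (n : ℕ) (i : Fin n) : An k n :=
  RingQuot.mkAlgHom k (ARel k n) (FreeAlgebra.ι k (WGen.pa i))

/-- The element `v = 1 ⊗ v ∈ W`. -/
noncomputable def vW (k : Type) [Field k] (n : ℕ) : Wc k n :=
  Polynomial.C Polynomial.X

/-- The element `ξᵢ = 1 ⊗ ξᵢ ∈ W`. -/
noncomputable def xiW (k : Type) [Field k] (n : ℕ) (i : Fin n) : Wc k n :=
  Polynomial.C (Polynomial.C (xg k n i))

/-- The element `∂ᵢ = 1 ⊗ ∂ᵢ ∈ W`. -/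
noncomputable def paW (k : Type) [Field k] (n : ℕ) (i : Fin n) : Wc k n :=
  Polynomial.C (Polynomial.C (dg k n i))

/-- The element `v - D = 1 ⊗ v - D ⊗ 1 ∈ W`. -/
noncomputable def vmD (k : Type) [Field k] (n : ℕ) : Wc k n :=
  (Polynomial.C (Polynomial.X : Av k n) : Wc k n) - (Polynomial.X : Wc k n)

/-- The map `D` on `W`: multiplication by the outer variable. -/
noncomputable def Dm (k : Type) [Field k] (n : ℕ) : Wc k n →ₗ[k] Wc k n :=
  LinearMap.mulLeft k (Polynomial.X : Wc k n)

/-- The condition characterizing the conformal products of `W`: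
`(1 ⊗ f) ∘ₘ (1 ⊗ g) = 1 ⊗ f·(∂ᵐ g/∂vᵐ)` together with axioms (C2) and (C3). -/
def IsWProd (k : Type) [Field k] (n : ℕ)
    (P : ℕ → Wc k n →ₗ[k] Wc k n →ₗ[k] Wc k n) : Prop :=
  (∀ (m : ℕ) (f g : Av k n),
      P m (Polynomial.C f) (Polynomial.C g)
        = Polynomial.C (f * (fun q => Polynomial.derivative q)^[m] g)) ∧
  (∀ (m : ℕ) (a b : Wc k n), P m (Dm k n a) b = -((m : k)) • P (m - 1) a b) ∧
  (∀ (m : ℕ) (a b : Wc k n),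
      P m a (Dm k n b) = Dm k n (P m a b) + (m : k) • P (m - 1) a b)

/-- The locality function `N_W(x,y) = min {N | x ∘ₘ y = 0 for all m ≥ N}`. -/
noncomputable def locNW (k : Type) [Field k] (n : ℕ)
    (P : ℕ → Wc k n →ₗ[k] Wc k n →ₗ[k] Wc k n) (x y : Wc k n) : ℕ :=
  sInf {N : ℕ | ∀ m, N ≤ m → P m x y = 0}

/-- The smallest `D`-invariant subspace of `W` closed under all the products and
containing a set `S`. -/
noncomputable def confCl (k : Type) [Field k] (n : ℕ)
    (P : ℕ → Wc k n →ₗ[k] Wc k n →ₗ[k] Wc k n) (S : Set (Wc k n)) :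
    Submodule k (Wc k n) :=
  sInf {U : Submodule k (Wc k n) | S ⊆ U ∧ (∀ x ∈ U, Dm k n x ∈ U) ∧
    ∀ (m : ℕ), ∀ x ∈ U, ∀ y ∈ U, P m x y ∈ U}

/-- The conformal subalgebra `C₁ ⊆ W`, generated by `v - D`, `(v - D)ξᵢ`, `∂ᵢ`. -/
noncomputable def C1sub (k : Type) [Field k] (n : ℕ)
    (P : ℕ → Wc k n →ₗ[k] Wc k n →ₗ[k] Wc k n) : Submodule k (Wc k n) :=
  confCl k n P
    ({vmD k n} ∪ Set.range (fun i => vmD k n * xiW k n i) ∪ Set.range (paW k n))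

/-- The conformal subalgebra `C₂ ⊆ W`, generated by `v`, `vξᵢ`, `∂ᵢ`. -/
noncomputable def C2sub (k : Type) [Field k] (n : ℕ)
    (P : ℕ → Wc k n →ₗ[k] Wc k n →ₗ[k] Wc k n) : Submodule k (Wc k n) :=
  confCl k n P
    ({vW k n} ∪ Set.range (fun i => vW k n * xiW k n i) ∪ Set.range (paW k n))

/-! The elements `v`, `vξᵢ`, `∂ᵢ` all have the form `1 ⊗ a vᵖ` with `p ≤ 1`, so their products
`x ∘ₘ y` vanish for `m ≥ 2` and each bracket reduces to at most three products, computed by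
`(a vᵖ) ∘₀ (b v^q) = ab v^{p+q}`, `(a vᵖ) ∘₁ (b v) = ab vᵖ` and `(a vᵖ) ∘₁ b = 0`. The relations
then follow from the anticommutation relations of `Aₙ`. -/

section Bracket

variable {k : Type} [Field k] {M : Type} [AddCommGroup M] [Module k M]
  (D : M →ₗ[k] M) (P : ℕ → M →ₗ[k] M →ₗ[k] M)

theorem cbrR_eq_zero_of_prod_eq_zero {m : ℕ} {b a : M} (hz : ∀ t, m ≤ t → P t b a = 0) :
    cbrR D P m b a = 0 :=
  finsum_eq_zero_of_forall_eq_zero fun s => by simp [hz (m + s) (Nat.le_add_right m s)]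

theorem cbrR_eq_of_prod_eq_zero_of_two_le {b a : M} (hz : ∀ t, 2 ≤ t → P t b a = 0)
    (m : ℕ) :
    cbrR D P m b a = (-1 : k) ^ m • P m b a + (-1 : k) ^ (m + 1) • D (P (m + 1) b a) := by
  rw [cbrR, finsum_eq_finsetSum_of_support_subset (s := Finset.range 2)]
  · simp [Finset.sum_range_succ]
  · intro s hs
    by_contra hs2
    simp only [Finset.coe_range, Set.mem_Iio, not_lt] at hs2
    simp [hz (m + s) (by omega)] at hs

variable (pa pb : Bool) {a b : M} (hz : ∀ t, 2 ≤ t → P t b a = 0)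
include hz

theorem sbrR_zero_eq_of_prod_eq_zero_of_two_le :
    sbrR D P pa pb 0 a b
      = P 0 a b - (if pa && pb then (-1 : k) else 1) • (P 0 b a - D (P 1 b a)) := by
  rw [sbrR, cbrR_eq_of_prod_eq_zero_of_two_le D P hz]
  simp [sub_eq_add_neg]

theorem sbrR_one_eq_of_prod_eq_zero_of_two_le :
    sbrR D P pa pb 1 a b = P 1 a b + (if pa && pb then (-1 : k) else 1) • P 1 b a := by
  rw [sbrR, cbrR_eq_of_prod_eq_zero_of_two_le D P hz, hz 2 le_rfl]
  simp

theorem sbrR_eq_zero_of_prod_eq_zero_of_two_le (hz' : ∀ t, 2 ≤ t → P t a b = 0) {m : ℕ}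
    (hm : 2 ≤ m) : sbrR D P pa pb m a b = 0 := by
  rw [sbrR, hz' m hm, cbrR_eq_zero_of_prod_eq_zero D P fun t ht => hz t (hm.trans ht)]
  simp

end Bracket

section Generators

variable {k : Type} [Field k] {n : ℕ}

theorem xg_mul_xg (i j : Fin n) : xg k n i * xg k n j = -(xg k n j * xg k n i) := by
  rw [eq_neg_iff_add_eq_zero]
  simpa [xg] using RingQuot.mkAlgHom_rel k (ARel.xixi (k := k) i j)

theorem dg_mul_dg (i j : Fin n) : dg k n i * dg k n j = -(dg k n j * dg k n i) := by
  rw [eq_neg_iff_add_eq_zero]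
  simpa [dg] using RingQuot.mkAlgHom_rel k (ARel.papa (k := k) i j)

theorem dg_mul_xg_add_xg_mul_dg (i j : Fin n) :
    dg k n i * xg k n j + xg k n j * dg k n i = if i = j then 1 else 0 := by
  have h := RingQuot.mkAlgHom_rel k (ARel.paxi (k := k) i j)
  split_ifs at h ⊢ <;> simpa [dg, xg] using h

open Polynomial

theorem vW_eq_C_monomial : vW k n = C (monomial 1 (1 : An k n)) := by
  rw [vW, monomial_one_one_eq_X]

theorem vW_mul_xiW_eq_C_monomial (i : Fin n) :
    vW k n * xiW k n i = C (monomial 1 (xg k n i)) := by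
  rw [vW, xiW, ← map_mul, X_mul_C, C_mul_X_eq_monomial]

theorem paW_eq_C_monomial (j : Fin n) : paW k n j = C (monomial 0 (dg k n j)) := by
  rw [paW, monomial_zero_left]

end Generators

section Products

open Polynomial

variable {k : Type} [Field k] {n : ℕ} {Pr : ℕ → Wc k n →ₗ[k] Wc k n →ₗ[k] Wc k n}
  (hPr : IsWProd k n Pr) (p q : ℕ) (a b : An k n)
include hPr

theorem IsWProd.prod_zero :
    Pr 0 (C (monomial p a)) (C (monomial q b)) = C (monomial (p + q) (a * b)) := by
  simp [hPr.1 0, monomial_mul_monomial]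

theorem IsWProd.prod_one_monomial_one :
    Pr 1 (C (monomial p a)) (C (monomial 1 b)) = C (monomial p (a * b)) := by
  simp [hPr.1 1]

theorem IsWProd.prod_one_monomial_zero : Pr 1 (C (monomial p a)) (C (monomial 0 b)) = 0 := by
  simp [hPr.1 1]

theorem IsWProd.prod_eq_zero_of_two_le (hq : q ≤ 1) :
    ∀ t, 2 ≤ t → Pr t (C (monomial p a)) (C (monomial q b)) = 0 := by
  intro t ht
  rw [hPr.1, iterate_derivative_eq_zero ((natDegree_monomial_le b).trans_lt (by omega)),
    mul_zero, map_zero]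

end Products

section Relations

open Polynomial

variable {k : Type} [Field k] {n : ℕ} {Pr : ℕ → Wc k n →ₗ[k] Wc k n →ₗ[k] Wc k n}
  (hPr : IsWProd k n Pr)
include hPr

theorem IsWProd.sbrR_X_zero_X (i j : Fin n) :
    sbrR (Dm k n) Pr true true 0 (vW k n * xiW k n i) (vW k n * xiW k n j)
      = Dm k n (C (monomial 1 (xg k n i * xg k n j))) := by
  rw [vW_mul_xiW_eq_C_monomial, vW_mul_xiW_eq_C_monomial,
    sbrR_zero_eq_of_prod_eq_zero_of_two_le _ _ _ _ (hPr.prod_eq_zero_of_two_le _ _ _ _ le_rfl),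
    hPr.prod_zero, hPr.prod_zero, hPr.prod_one_monomial_one, xg_mul_xg j i]
  simp

theorem IsWProd.sbrR_X_one_X (i j : Fin n) :
    sbrR (Dm k n) Pr true true 1 (vW k n * xiW k n i) (vW k n * xiW k n j)
      = (2 : k) • C (monomial 1 (xg k n i * xg k n j)) := by
  rw [vW_mul_xiW_eq_C_monomial, vW_mul_xiW_eq_C_monomial,
    sbrR_one_eq_of_prod_eq_zero_of_two_le _ _ _ _ (hPr.prod_eq_zero_of_two_le _ _ _ _ le_rfl),
    hPr.prod_one_monomial_one, hPr.prod_one_monomial_one, xg_mul_xg j i]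
  simp [two_smul]

theorem IsWProd.sbrR_X_zero_X_eq_neg (i j : Fin n) :
    sbrR (Dm k n) Pr true true 0 (vW k n * xiW k n i) (vW k n * xiW k n j)
      = -sbrR (Dm k n) Pr true true 0 (vW k n * xiW k n j) (vW k n * xiW k n i) := by
  rw [hPr.sbrR_X_zero_X, hPr.sbrR_X_zero_X, xg_mul_xg, map_neg, map_neg, map_neg]

theorem IsWProd.sbrR_X_zero_X_eq_half_Dm [NeZero (2 : k)] (i j : Fin n) :
    sbrR (Dm k n) Pr true true 0 (vW k n * xiW k n i) (vW k n * xiW k n j)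
      = (2 : k)⁻¹ •
          Dm k n (sbrR (Dm k n) Pr true true 1 (vW k n * xiW k n i) (vW k n * xiW k n j)) := by
  rw [hPr.sbrR_X_zero_X, hPr.sbrR_X_one_X, map_smul, inv_smul_smul₀ two_ne_zero]

theorem IsWProd.sbrR_P_P (m : ℕ) (i j : Fin n) :
    sbrR (Dm k n) Pr true true m (paW k n i) (paW k n j) = 0 := by
  have hz : ∀ (a b : An k n), ∀ t, 2 ≤ t → Pr t (C (monomial 0 a)) (C (monomial 0 b)) = 0 :=
    fun a b => hPr.prod_eq_zero_of_two_le _ _ _ _ zero_le_one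
  rw [paW_eq_C_monomial, paW_eq_C_monomial]
  rcases m with _ | _ | m
  · rw [sbrR_zero_eq_of_prod_eq_zero_of_two_le _ _ _ _ (hz _ _), hPr.prod_zero, hPr.prod_zero,
      hPr.prod_one_monomial_zero, dg_mul_dg j i]
    simp
  · rw [sbrR_one_eq_of_prod_eq_zero_of_two_le _ _ _ _ (hz _ _), hPr.prod_one_monomial_zero,
      hPr.prod_one_monomial_zero]
    simp
  · exact sbrR_eq_zero_of_prod_eq_zero_of_two_le _ _ _ _ (hz _ _) (hz _ _) (by omega)

theorem IsWProd.sbrR_P_zero_X (i j : Fin n) :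
    sbrR (Dm k n) Pr true true 0 (paW k n j) (vW k n * xiW k n i)
      = if i = j then vW k n else 0 := by
  rw [vW_mul_xiW_eq_C_monomial, paW_eq_C_monomial,
    sbrR_zero_eq_of_prod_eq_zero_of_two_le _ _ _ _ (hPr.prod_eq_zero_of_two_le _ _ _ _ zero_le_one),
    hPr.prod_zero, hPr.prod_zero, hPr.prod_one_monomial_zero]
  simp only [Bool.and_self, ite_true, map_zero, sub_zero, neg_smul, one_smul, sub_neg_eq_add,
    zero_add, add_zero]
  rw [← map_add, ← map_add, dg_mul_xg_add_xg_mul_dg j i, vW_eq_C_monomial]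
  rcases eq_or_ne i j with rfl | hij
  · simp
  · simp [hij, hij.symm]

theorem IsWProd.sbrR_V_zero_X (i : Fin n) :
    sbrR (Dm k n) Pr false true 0 (vW k n) (vW k n * xiW k n i) = Dm k n (vW k n * xiW k n i) := by
  rw [vW_mul_xiW_eq_C_monomial, vW_eq_C_monomial,
    sbrR_zero_eq_of_prod_eq_zero_of_two_le _ _ _ _ (hPr.prod_eq_zero_of_two_le _ _ _ _ le_rfl),
    hPr.prod_zero, hPr.prod_zero, hPr.prod_one_monomial_one]
  simp

theorem IsWProd.sbrR_X_zero_V (i : Fin n) :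
    sbrR (Dm k n) Pr true false 0 (vW k n * xiW k n i) (vW k n) = Dm k n (vW k n * xiW k n i) := by
  rw [vW_mul_xiW_eq_C_monomial, vW_eq_C_monomial,
    sbrR_zero_eq_of_prod_eq_zero_of_two_le _ _ _ _ (hPr.prod_eq_zero_of_two_le _ _ _ _ le_rfl),
    hPr.prod_zero, hPr.prod_zero, hPr.prod_one_monomial_one]
  simp

theorem IsWProd.sbrR_X_one_V (i : Fin n) :
    sbrR (Dm k n) Pr true false 1 (vW k n * xiW k n i) (vW k n)
      = (2 : k) • (vW k n * xiW k n i) := by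
  rw [vW_mul_xiW_eq_C_monomial, vW_eq_C_monomial,
    sbrR_one_eq_of_prod_eq_zero_of_two_le _ _ _ _ (hPr.prod_eq_zero_of_two_le _ _ _ _ le_rfl),
    hPr.prod_one_monomial_one, hPr.prod_one_monomial_one]
  simp [two_smul]

theorem IsWProd.sbrR_P_zero_V (j : Fin n) :
    sbrR (Dm k n) Pr true false 0 (paW k n j) (vW k n) = 0 := by
  rw [paW_eq_C_monomial, vW_eq_C_monomial,
    sbrR_zero_eq_of_prod_eq_zero_of_two_le _ _ _ _ (hPr.prod_eq_zero_of_two_le _ _ _ _ zero_le_one),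
    hPr.prod_zero, hPr.prod_zero, hPr.prod_one_monomial_zero]
  simp

theorem IsWProd.sbrR_P_one_V (j : Fin n) :
    sbrR (Dm k n) Pr true false 1 (paW k n j) (vW k n) = paW k n j := by
  rw [paW_eq_C_monomial, vW_eq_C_monomial,
    sbrR_one_eq_of_prod_eq_zero_of_two_le _ _ _ _ (hPr.prod_eq_zero_of_two_le _ _ _ _ zero_le_one),
    hPr.prod_one_monomial_one, hPr.prod_one_monomial_zero]
  simp

theorem IsWProd.sbrR_V_zero_V :
    sbrR (Dm k n) Pr false false 0 (vW k n) (vW k n) = Dm k n (vW k n) := by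
  rw [vW_eq_C_monomial,
    sbrR_zero_eq_of_prod_eq_zero_of_two_le _ _ _ _ (hPr.prod_eq_zero_of_two_le _ _ _ _ le_rfl),
    hPr.prod_zero, hPr.prod_one_monomial_one]
  simp

theorem IsWProd.sbrR_V_one_V :
    sbrR (Dm k n) Pr false false 1 (vW k n) (vW k n) = (2 : k) • vW k n := by
  rw [vW_eq_C_monomial,
    sbrR_one_eq_of_prod_eq_zero_of_two_le _ _ _ _ (hPr.prod_eq_zero_of_two_le _ _ _ _ le_rfl),
    hPr.prod_one_monomial_one]
  simp [two_smul]

theorem IsWProd.sbrR_eq_zero_of_two_le (pa pb : Bool) {p q m : ℕ} (hp : p ≤ 1) (hq : q ≤ 1)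
    (a b : An k n) (hm : 2 ≤ m) :
    sbrR (Dm k n) Pr pa pb m (C (monomial p a)) (C (monomial q b)) = 0 :=
  sbrR_eq_zero_of_prod_eq_zero_of_two_le _ _ _ _ (hPr.prod_eq_zero_of_two_le _ _ _ _ hp)
    (hPr.prod_eq_zero_of_two_le _ _ _ _ hq) hm

end Relations

theorem stmt_4_general (k : Type) [Field k] [CharZero k] (n : ℕ)
    (Pr : ℕ → Wc k n →ₗ[k] Wc k n →ₗ[k] Wc k n) (hPr : IsWProd k n Pr) :
    WRelsR (Dm k n) Pr (vW k n) (fun i => vW k n * xiW k n i) (paW k n) := by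
  refine ⟨hPr.sbrR_X_zero_X_eq_neg, hPr.sbrR_P_P, hPr.sbrR_P_zero_X, hPr.sbrR_V_zero_X,
    hPr.sbrR_X_zero_V, hPr.sbrR_X_one_V, hPr.sbrR_P_zero_V, hPr.sbrR_P_one_V,
    hPr.sbrR_X_zero_X_eq_half_Dm, hPr.sbrR_V_zero_V, hPr.sbrR_V_one_V, fun m hm => ?_⟩
  simp only [vW_mul_xiW_eq_C_monomial, paW_eq_C_monomial]
  rw [vW_eq_C_monomial]
  exact ⟨fun i j => hPr.sbrR_eq_zero_of_two_le _ _ le_rfl le_rfl _ _ hm,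
    fun j => hPr.sbrR_eq_zero_of_two_le _ _ le_rfl zero_le_one _ _ hm,
    fun i j => hPr.sbrR_eq_zero_of_two_le _ _ le_rfl zero_le_one _ _ hm,
    fun i => hPr.sbrR_eq_zero_of_two_le _ _ le_rfl le_rfl _ _ hm,
    hPr.sbrR_eq_zero_of_two_le _ _ le_rfl le_rfl _ _ hm⟩

/-- the elements `V = v`, `Xᵢ = vξᵢ` (odd), `Pᵢ = ∂ᵢ` (odd)
of `W` satisfy the defining relations of `Wₙ` (i.e. `φ₂` is a homomorphism of Lie
conformal superalgebras `Wₙ → W⁽⁻⁾`). -/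
theorem stmt_4 (k : Type) [Field k] [CharZero k] (n : ℕ) (hn : 1 ≤ n)
    (Pr : ℕ → Wc k n →ₗ[k] Wc k n →ₗ[k] Wc k n) (hPr : IsWProd k n Pr) :
    WRelsR (Dm k n) Pr (vW k n) (fun i => vW k n * xiW k n i) (paW k n) :=
  stmt_4_general k n Pr hPr
end

section
/- In W = k[D] ⊗ Aₙ[v] (n ≥ 1), set V := v, Xᵢ := vξᵢ, Pᵢ := ∂ᵢ. Then the induced locality function equals N₂, i.e.: N_W(V,V) = N_W(V,Xⱼ) = N_W(Xᵢ,V) = N_W(Pᵢ,V) = N_W(Pᵢ,Xⱼ) = 2 for all i,j; N_W(Xᵢ,Xⱼ) = 2 for i ≠ j and N_W(Xᵢ,Xᵢ) = 0; N_W(V,Pⱼ) = N_W(Xᵢ,Pⱼ) = 1 for all i,j; N_W(Pᵢ,Pⱼ) = 1 for i ≠ j and N_W(Pᵢ,Pᵢ) = 0. -/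
set_option maxSynthPendingDepth 5

namespace Polynomial

variable {R : Type*} [Semiring R]

theorem iterate_derivative_monomial (e m : ℕ) (b : R) :
    derivative^[m] (monomial e b) = monomial (e - m) (e.descFactorial m • b) := by
  induction m with
  | zero => simp
  | succ m ih =>
    rw [Function.iterate_succ_apply', ih, derivative_monomial, Nat.sub_sub,
      Nat.descFactorial_succ, mul_comm (e - m), mul_smul, smul_mul_assoc, ← Nat.cast_comm,
      ← nsmul_eq_mul]

theorem sInf_monomial_mul_iterate_derivative_monomial [IsAddTorsionFree R] [DecidableEq R]
    (d e : ℕ) (a b : R) :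
    sInf {N : ℕ | ∀ m, N ≤ m → monomial d a * derivative^[m] (monomial e b) = 0} =
      if a * b = 0 then 0 else e + 1 := by
  simp only [iterate_derivative_monomial, monomial_mul_monomial, mul_smul_comm,
    monomial_eq_zero_iff, smul_eq_zero, Nat.descFactorial_eq_zero_iff_lt]
  split_ifs with hab
  · exact Nat.sInf_eq_zero.2 (Or.inl fun m _ => Or.inr hab)
  · have hset : {N : ℕ | ∀ m, N ≤ m → e < m ∨ a * b = 0} = Set.Ici (e + 1) := by
      ext N
      simp only [hab, or_false, Set.mem_ofPred_eq, Set.mem_Ici]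
      exact ⟨fun h => h N le_rfl, fun h m hm => by omega⟩
    rw [hset, csInf_Ici]

end Polynomial

open Polynomial

section ExteriorRepresentation

open CliffordAlgebra

variable (k : Type) [Field k] (n : ℕ)

noncomputable def exteriorRepFree :
    FreeAlgebra k (WGen n) →ₐ[k] Module.End k (ExteriorAlgebra k (Fin n → k)) :=
  FreeAlgebra.lift k fun
    | .xi i => LinearMap.mulLeft k (ExteriorAlgebra.ι k (Pi.single i 1))
    | .pa i => contractLeft (LinearMap.proj i)

variable {k n} in
theorem exteriorRepFree_rel ⦃a b : FreeAlgebra k (WGen n)⦄ (h : ARel k n a b) :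
    exteriorRepFree k n a = exteriorRepFree k n b := by
  refine LinearMap.ext fun x => ?_
  induction h with
  | xixi i j =>
    simp only [exteriorRepFree, map_add, map_mul, FreeAlgebra.lift_ι_apply, map_zero,
      LinearMap.add_apply, Module.End.mul_apply, LinearMap.mulLeft_apply, LinearMap.zero_apply]
    rw [← mul_assoc, ← mul_assoc, ← add_mul, ExteriorAlgebra.ι_add_mul_swap, zero_mul]
  | papa i j =>
    simp only [exteriorRepFree, map_add, map_mul, FreeAlgebra.lift_ι_apply, map_zero,
      LinearMap.add_apply, Module.End.mul_apply, LinearMap.zero_apply]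
    rw [contractLeft_comm, neg_add_cancel]
  | paxi i j =>
    simp only [exteriorRepFree, map_add, map_mul, FreeAlgebra.lift_ι_apply,
      LinearMap.add_apply, Module.End.mul_apply, LinearMap.mulLeft_apply]
    rw [contractLeft_ι_mul, sub_add_cancel]
    split_ifs with hij <;> simp [hij]

noncomputable def exteriorRep : An k n →ₐ[k] Module.End k (ExteriorAlgebra k (Fin n → k)) :=
  RingQuot.liftAlgHom k ⟨exteriorRepFree k n, exteriorRepFree_rel⟩

variable {k n}

@[simp]
theorem exteriorRep_xg (i : Fin n) (x : ExteriorAlgebra k (Fin n → k)) :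
    exteriorRep k n (xg k n i) x = ExteriorAlgebra.ι k (Pi.single i 1) * x := by
  rw [exteriorRep, xg, RingQuot.liftAlgHom_mkAlgHom_apply, exteriorRepFree,
    FreeAlgebra.lift_ι_apply]
  rfl

@[simp]
theorem exteriorRep_dg (i : Fin n) (x : ExteriorAlgebra k (Fin n → k)) :
    exteriorRep k n (dg k n i) x = contractLeft (LinearMap.proj i) x := by
  rw [exteriorRep, dg, RingQuot.liftAlgHom_mkAlgHom_apply, exteriorRepFree,
    FreeAlgebra.lift_ι_apply]

instance : Nontrivial (An k n) := (exteriorRep k n).toRingHom.domain_nontrivial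

theorem ne_zero_of_exteriorRep_ne_zero {a : An k n} {x : ExteriorAlgebra k (Fin n → k)}
    (h : exteriorRep k n a x ≠ 0) : a ≠ 0 := by
  rintro rfl
  simp at h

theorem xg_mul_xg_ne_zero {i j : Fin n} (hij : i ≠ j) : xg k n i * xg k n j ≠ 0 := by
  refine ne_zero_of_exteriorRep_ne_zero (x := 1) fun h => ?_
  have := congrArg (contractLeft (LinearMap.proj j) ∘ contractLeft (LinearMap.proj i)) h
  simp [contractLeft_ι_mul, hij] at this

theorem dg_mul_dg_ne_zero {i j : Fin n} (hij : i ≠ j) : dg k n i * dg k n j ≠ 0 :=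
  ne_zero_of_exteriorRep_ne_zero (x := exteriorRep k n (xg k n j * xg k n i) 1) <| by
    simp [contractLeft_ι_mul, Ne.symm hij]

theorem xg_mul_dg_ne_zero (i j : Fin n) : xg k n i * dg k n j ≠ 0 := by
  refine ne_zero_of_exteriorRep_ne_zero (x := exteriorRep k n (xg k n j) 1) fun h => ?_
  have := congrArg (contractLeft (LinearMap.proj i)) h
  simp at this

theorem dg_mul_xg_ne_zero (i j : Fin n) : dg k n i * xg k n j ≠ 0 := by
  by_cases hij : i = j
  · subst hij
    exact ne_zero_of_exteriorRep_ne_zero (x := 1) (by simp)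
  · refine ne_zero_of_exteriorRep_ne_zero (x := exteriorRep k n (xg k n i) 1) fun h => ?_
    have := congrArg (contractLeft (LinearMap.proj j)) h
    simp [contractLeft_ι_mul, hij] at this

theorem xg_ne_zero (i : Fin n) : xg k n i ≠ 0 := left_ne_zero_of_mul (xg_mul_dg_ne_zero i i)

theorem dg_ne_zero (i : Fin n) : dg k n i ≠ 0 := right_ne_zero_of_mul (xg_mul_dg_ne_zero i i)

end ExteriorRepresentation

section Relations

variable {k : Type} [Field k] {n : ℕ}

instance [CharZero k] : IsAddTorsionFree (An k n) := .of_isTorsionFree k _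

theorem xg_mul_self [NeZero (2 : k)] (i : Fin n) : xg k n i * xg k n i = 0 := by
  have h := RingQuot.mkAlgHom_rel k (ARel.xixi (k := k) i i)
  rw [map_add, map_mul, map_zero, ← two_smul k] at h
  exact (smul_eq_zero.1 h).resolve_left two_ne_zero

theorem dg_mul_self [NeZero (2 : k)] (i : Fin n) : dg k n i * dg k n i = 0 := by
  have h := RingQuot.mkAlgHom_rel k (ARel.papa (k := k) i i)
  rw [map_add, map_mul, map_zero, ← two_smul k] at h
  exact (smul_eq_zero.1 h).resolve_left two_ne_zero

end Relations

section Locality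

variable {k : Type} [Field k] {n : ℕ}

theorem vW_eq : vW k n = C (monomial 1 1) := by
  rw [vW, monomial_one_one_eq_X]

theorem xiW_eq (i : Fin n) : xiW k n i = C (monomial 0 (xg k n i)) := by
  rw [xiW, monomial_zero_left]

theorem paW_eq (i : Fin n) : paW k n i = C (monomial 0 (dg k n i)) := by
  rw [paW, monomial_zero_left]

open Classical in
theorem locNW_C_monomial [CharZero k] {Pr : ℕ → Wc k n →ₗ[k] Wc k n →ₗ[k] Wc k n}
    (hPr : IsWProd k n Pr) (d e : ℕ) (a b : An k n) :
    locNW k n Pr (C (monomial d a)) (C (monomial e b)) = if a * b = 0 then 0 else e + 1 := by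
  simp only [locNW, hPr.1, C_eq_zero]
  exact sInf_monomial_mul_iterate_derivative_monomial d e a b

end Locality

theorem stmt_6_general (k : Type) [Field k] [CharZero k] (n : ℕ)
    (Pr : ℕ → Wc k n →ₗ[k] Wc k n →ₗ[k] Wc k n) (hPr : IsWProd k n Pr) :
    locNW k n Pr (vW k n) (vW k n) = 2 ∧
    (∀ j, locNW k n Pr (vW k n) (vW k n * xiW k n j) = 2) ∧
    (∀ i, locNW k n Pr (vW k n * xiW k n i) (vW k n) = 2) ∧
    (∀ i, locNW k n Pr (paW k n i) (vW k n) = 2) ∧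
    (∀ i j, locNW k n Pr (paW k n i) (vW k n * xiW k n j) = 2) ∧
    (∀ i j, i ≠ j → locNW k n Pr (vW k n * xiW k n i) (vW k n * xiW k n j) = 2) ∧
    (∀ i, locNW k n Pr (vW k n * xiW k n i) (vW k n * xiW k n i) = 0) ∧
    (∀ j, locNW k n Pr (vW k n) (paW k n j) = 1) ∧
    (∀ i j, locNW k n Pr (vW k n * xiW k n i) (paW k n j) = 1) ∧
    (∀ i j, i ≠ j → locNW k n Pr (paW k n i) (paW k n j) = 1) ∧
    (∀ i, locNW k n Pr (paW k n i) (paW k n i) = 0) := by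
  simp only [vW_eq, xiW_eq, paW_eq, ← C_mul, monomial_mul_monomial, locNW_C_monomial hPr,
    one_mul, mul_one, xg_mul_self, dg_mul_self]
  simp +contextual [xg_ne_zero, dg_ne_zero, xg_mul_dg_ne_zero, dg_mul_xg_ne_zero,
    xg_mul_xg_ne_zero, dg_mul_dg_ne_zero]

/-- the locality function induced by `φ₂` on the generators equals `N₂`. -/
theorem stmt_6 (k : Type) [Field k] [CharZero k] (n : ℕ) (hn : 1 ≤ n)
    (Pr : ℕ → Wc k n →ₗ[k] Wc k n →ₗ[k] Wc k n) (hPr : IsWProd k n Pr) :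
    locNW k n Pr (vW k n) (vW k n) = 2 ∧
    (∀ j, locNW k n Pr (vW k n) (vW k n * xiW k n j) = 2) ∧
    (∀ i, locNW k n Pr (vW k n * xiW k n i) (vW k n) = 2) ∧
    (∀ i, locNW k n Pr (paW k n i) (vW k n) = 2) ∧
    (∀ i j, locNW k n Pr (paW k n i) (vW k n * xiW k n j) = 2) ∧
    (∀ i j, i ≠ j → locNW k n Pr (vW k n * xiW k n i) (vW k n * xiW k n j) = 2) ∧
    (∀ i, locNW k n Pr (vW k n * xiW k n i) (vW k n * xiW k n i) = 0) ∧
    (∀ j, locNW k n Pr (vW k n) (paW k n j) = 1) ∧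
    (∀ i j, locNW k n Pr (vW k n * xiW k n i) (paW k n j) = 1) ∧
    (∀ i j, i ≠ j → locNW k n Pr (paW k n i) (paW k n j) = 1) ∧
    (∀ i, locNW k n Pr (paW k n i) (paW k n i) = 0) :=
  stmt_6_general k n Pr hPr
end

section
/- Let A be a ℤ₂-graded associative conformal algebra containing homogeneous elements v (even) and ξ, ∂ (odd) such that [ξ∘₀v] = Dξ, [ξ∘₁v] = 2ξ, [∂∘₀ξ] = v, and such that v∘ₘξ = 0 for all m ≥ 1. Then ξ∘ₘξ = 0 for all m ≥ 0, and Dξ = 0. (Consequently, any associative envelope of Wₙ in which the locality of v on some ξᵢ is less than 2 is trivial.) -/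
section AuxStmt12

variable {k : Type} [Field k] {C : Type} [AddCommGroup C] [Module k C]

lemma aux_prodD_zero (A : ConfAlg k C) (a b : C) : A.prod 0 (A.Dmap a) b = 0 := by
  have := A.axC2 0 a b; simpa using this

lemma aux_prodD_one (A : ConfAlg k C) (a b : C) :
    A.prod 1 (A.Dmap a) b = - A.prod 0 a b := by
  have := A.axC2 1 a b; simpa using this

lemma aux_prodD_right (A : ConfAlg k C) (a b : C) :
    A.prod 0 a (A.Dmap b) = A.Dmap (A.prod 0 a b) := by
  have := A.axC3 0 a b; simpa using this

lemma aux_prod_pow_right (A : ConfAlg k C) (a : C) :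
    ∀ (s : ℕ) (b : C), A.prod 0 a ((A.Dmap ^ s) b) = (A.Dmap ^ s) (A.prod 0 a b)
  | 0, b => by simp
  | s + 1, b => by
    rw [pow_succ, Module.End.mul_apply, aux_prod_pow_right A a s (A.Dmap b),
      aux_prodD_right, ← Module.End.mul_apply, ← pow_succ]

lemma aux_prod0_pow_left (A : ConfAlg k C) (s : ℕ) (a b : C) :
    A.prod 0 ((A.Dmap ^ (s + 1)) a) b = 0 := by
  rw [pow_succ', Module.End.mul_apply, aux_prodD_zero]

lemma aux_assoc0 (A : ConfAlg k C) (hA : A.IsAssoc) (m : ℕ) (a b c : C) :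
    A.prod m (A.prod 0 a b) c = A.prod 0 a (A.prod m b c) := by
  have := hA 0 m a b c
  simpa using this

lemma aux_assoc1 (A : ConfAlg k C) (hA : A.IsAssoc) (m : ℕ) (a b c : C) :
    A.prod m (A.prod 1 a b) c
      = A.prod 1 a (A.prod m b c) - A.prod 0 a (A.prod (m + 1) b c) := by
  have := hA 1 m a b c
  rw [this, Finset.sum_range_succ, Finset.sum_range_one]
  simp [sub_eq_add_neg]

lemma aux_map_finsum {α : Type} {f : α → C} (g : C →ₗ[k] C)
    (hf : (Function.support f).Finite) :
    g (∑ᶠ i, f i) = ∑ᶠ i, g (f i) :=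
  g.toAddMonoidHom.map_finsum hf

end AuxStmt12

/-- if a ℤ₂-graded associative conformal algebra contains homogeneous
elements `v` (even), `ξ, ∂` (odd) with `[ξ ∘₀ v] = Dξ`, `[ξ ∘₁ v] = 2ξ`,
`[∂ ∘₀ ξ] = v` and `v ∘ₘ ξ = 0` for `m ≥ 1`, then `ξ ∘ₘ ξ = 0` for all `m`
and `Dξ = 0`. -/
theorem stmt_12 {k : Type} [Field k] [CharZero k] {C : Type} [AddCommGroup C] [Module k C]
    (A : ConfAlg k C) (hA : A.IsAssoc) (G : ConfGrading A)
    (v ξ pd : C)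
    (hv : v ∈ G.grade false) (hξ : ξ ∈ G.grade true) (hpd : pd ∈ G.grade true)
    (h1 : sbrR A.Dmap A.prod true false 0 ξ v = A.Dmap ξ)
    (h2 : sbrR A.Dmap A.prod true false 1 ξ v = (2 : k) • ξ)
    (h3 : sbrR A.Dmap A.prod true true 0 pd ξ = v)
    (h4 : ∀ m, 1 ≤ m → A.prod m v ξ = 0) :
    (∀ m : ℕ, A.prod m ξ ξ = 0) ∧ A.Dmap ξ = 0 := by
  -- unfold the bracket hypotheses
  have hcbr0 : cbrR A.Dmap A.prod 0 v ξ = A.prod 0 v ξ := by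
    unfold cbrR
    rw [finsum_eq_single _ 0 (fun s hs => by
      rw [h4 (0 + s) (by omega), map_zero, smul_zero])]
    simp
  have hcbr1 : cbrR A.Dmap A.prod 1 v ξ = 0 := by
    unfold cbrR
    exact finsum_eq_zero_of_forall_eq_zero (fun s => by
      rw [h4 (1 + s) (by omega), map_zero, smul_zero])
  have h1' : A.prod 0 ξ v = A.Dmap ξ + A.prod 0 v ξ := by
    unfold sbrR at h1
    simp only [Bool.and_false, Bool.false_eq_true, if_false, one_smul, hcbr0] at h1
    rw [sub_eq_iff_eq_add] at h1
    exact h1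
  have h2' : A.prod 1 ξ v = (2 : k) • ξ := by
    unfold sbrR at h2
    simp only [Bool.and_false, Bool.false_eq_true, if_false, one_smul, hcbr1,
      sub_zero] at h2
    exact h2
  have h3' : A.prod 0 pd ξ
      + ∑ᶠ s : ℕ, ((-1 : k) ^ (0 + s) * ((Nat.factorial s : k))⁻¹) •
          (A.Dmap ^ s) (A.prod (0 + s) ξ pd) = v := by
    unfold sbrR cbrR at h3
    simp only [Bool.and_self, if_true, neg_smul, one_smul, sub_neg_eq_add] at h3
    exact h3
  -- ξ ∘ₘ ξ = 0 for m ≥ 1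
  have key : ∀ m, 1 ≤ m → A.prod m ξ ξ = 0 := by
    intro m hm
    have e := aux_assoc1 A hA m ξ v ξ
    rw [h2', h4 m hm, h4 (m + 1) (by omega), map_zero, map_zero, sub_zero,
      map_smul, LinearMap.smul_apply] at e
    have h2ne : (2 : k) ≠ 0 := two_ne_zero
    rcases smul_eq_zero.mp e with h | h
    · exact absurd h h2ne
    · exact h
  -- ξ ∘₀ ξ = 0
  have e1 : A.prod 1 (A.prod 0 ξ v) ξ = 0 := by
    rw [aux_assoc0 A hA 1 ξ v ξ, h4 1 le_rfl, map_zero]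
  have h00 : A.prod 0 ξ ξ = 0 := by
    have e2 : A.prod 1 (A.prod 0 v ξ) ξ = 0 := by
      rw [aux_assoc0 A hA 1 v ξ ξ, key 1 le_rfl, map_zero]
    rw [h1', map_add, LinearMap.add_apply, aux_prodD_one, e2, add_zero,
      neg_eq_zero] at e1
    exact e1
  have hall : ∀ m : ℕ, A.prod m ξ ξ = 0 := by
    intro m
    cases m with
    | zero => exact h00
    | succ t => exact key (t + 1) (by omega)
  refine ⟨hall, ?_⟩
  -- support finiteness of the finsum in h3'
  obtain ⟨N, hN⟩ := A.locality ξ pd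
  have hsupp : (Function.support fun s : ℕ =>
      ((-1 : k) ^ (0 + s) * ((Nat.factorial s : k))⁻¹) •
        (A.Dmap ^ s) (A.prod (0 + s) ξ pd)).Finite := by
    apply Set.Finite.subset (Set.finite_Iio N)
    intro s hs
    simp only [Function.mem_support, ne_eq] at hs
    rw [Set.mem_Iio]
    by_contra hsN
    exact hs (by rw [hN (0 + s) (by omega), map_zero, smul_zero])
  -- v ∘₀ ξ = ξ ∘₀ (pd ∘₀ ξ)
  have step3 : A.prod 0 v ξ = A.prod 0 ξ (A.prod 0 pd ξ) := by
    have t := congrArg (fun x => ((A.prod 0).flip ξ) x) h3'.symm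
    simp only [map_add] at t
    rw [aux_map_finsum ((A.prod 0).flip ξ) hsupp] at t
    simp only [LinearMap.flip_apply, map_smul, LinearMap.smul_apply] at t
    rw [finsum_eq_single _ 0 (fun s hs => by
      obtain ⟨u, rfl⟩ := Nat.exists_eq_succ_of_ne_zero hs
      simp only [map_smul, LinearMap.smul_apply, aux_prod0_pow_left, smul_zero])] at t
    simp only [pow_zero, Nat.factorial_zero, Nat.cast_one, inv_one, one_mul, one_smul,
      Nat.add_zero, Nat.zero_add, Module.End.one_apply, map_smul,
      LinearMap.smul_apply, add_zero] at t
    rw [aux_assoc0 A hA 0 pd ξ ξ, h00, map_zero, zero_add,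
      aux_assoc0 A hA 0 ξ pd ξ] at t
    exact t
  -- ξ ∘₀ v = ξ ∘₀ (pd ∘₀ ξ)
  have step4 : A.prod 0 ξ v = A.prod 0 ξ (A.prod 0 pd ξ) := by
    have t := congrArg (fun x => (A.prod 0 ξ) x) h3'.symm
    simp only [map_add] at t
    rw [aux_map_finsum (A.prod 0 ξ) hsupp] at t
    rw [finsum_eq_zero_of_forall_eq_zero (fun s => by
      simp only [map_smul, aux_prod_pow_right, ← aux_assoc0 A hA (0 + s) ξ ξ pd, h00,
        map_zero, LinearMap.zero_apply, smul_zero]), add_zero] at t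
    exact t
  -- conclude Dξ = 0
  have hfin : A.Dmap ξ + A.prod 0 v ξ = A.prod 0 v ξ := by
    rw [← h1', step4, ← step3]
  exact add_right_cancel (b := A.prod 0 v ξ) (by rw [hfin, zero_add])
end
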